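/- arXiv:2304.03924 — 2 statements merged into one kernel-verified Lean document; each statement's English description precedes it below -/
import Mathlib

section
/- Let Z^q = (Z^q_{ij}(k))_{(i,j,k)∈Ẽ} be a centered Gaussian family with covariance V^q_{(i,j,k)(i',j',k')} = μ_{ii} 1{i=i'} q_{ij}(k)(1{j=j', k=k'} − q_{i'j'}(k')). Then for every i ∈ E, ∑_{j∈E} ∑_{k≤K} Z^q_{ij}(k) → 0 in L² as K → ∞; consequently S Z^q is well-defined (the defining series converges in L²) and (S Z^q)_{ij}(k) = − 1{i=j} ∑_{j'∈E} ∑_{k'≤k} Z^q_{ij'}(k') for all (i,j,k) ∈ Ẽ. -/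
open MeasureTheory Filter Topology Finset ProbabilityTheory

noncomputable section

namespace SMCPaper

variable {E : Type} [Fintype E] [DecidableEq E] {Ω : Type} [MeasurableSpace Ω]

/-- `q` is a (discrete-time) semi-Markov kernel on the finite state space `E`:
nonnegative entries, `q i j 0 = 0`, and total mass `1` from every state. -/
def IsSemiMarkovKernel (q : E → E → ℕ → ℝ) : Prop :=
  (∀ i j k, 0 ≤ q i j k) ∧ (∀ i j, q i j 0 = 0) ∧
    ∀ i, HasSum (fun p : E × ℕ => q i p.1 p.2) 1

/-- The sojourn times `X n = S n − S (n−1)` (so `X 0 = 0` when `S 0 = 0`). -/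
def Xproc (S : ℕ → Ω → ℕ) (n : ℕ) (ω : Ω) : ℕ := S n ω - S (n - 1) ω

/-- `(J, S)` is a Markov renewal chain with semi-Markov kernel `q` under the family of
probability measures `P i₀` (the chain starting at `i₀`):  `J 0 = i₀`, `S 0 = 0` a.s., and
the process `(J, X)` is a time-homogeneous Markov chain with transitions
`P(J_{n+1} = j, X_{n+1} = k | J_n = i, past) = q i j k`. -/
def IsMarkovRenewalChain (P : E → Measure Ω) (J : ℕ → Ω → E) (S : ℕ → Ω → ℕ)
    (q : E → E → ℕ → ℝ) : Prop :=
  (∀ i, IsProbabilityMeasure (P i)) ∧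
  (∀ n i, MeasurableSet {ω | J n ω = i}) ∧
  (∀ n k, MeasurableSet {ω | S n ω = k}) ∧
  (∀ i₀, P i₀ {ω | J 0 ω = i₀ ∧ S 0 ω = 0} = 1) ∧
  (∀ i₀ (n : ℕ) (js : ℕ → E) (xs : ℕ → ℕ),
    P i₀ ({ω | J (n+1) ω = js (n+1) ∧ Xproc S (n+1) ω = xs (n+1)} ∩
        {ω | ∀ l ≤ n, J l ω = js l ∧ Xproc S l ω = xs l}) =
      ENNReal.ofReal (q (js n) (js (n+1)) (xs (n+1))) *
        P i₀ {ω | ∀ l ≤ n, J l ω = js l ∧ Xproc S l ω = xs l})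

/-- First hitting time (after time `0`) of the state `j` by the embedded chain `J`. -/
def tau (J : ℕ → Ω → E) (j : E) (ω : Ω) : ℕ := sInf {n | 1 ≤ n ∧ J n ω = j}

/-- Mean recurrence time `μ_{ii} = E_i[S_{τ_i}]`. -/
def mrt (P : E → Measure Ω) (J : ℕ → Ω → E) (S : ℕ → Ω → ℕ) (i : E) : ℝ :=
  ∫ ω, (S (tau J i ω) ω : ℝ) ∂(P i)

/-- Assumption (A): irreducibility of the embedded chain, aperiodicity of the Markov
renewal chain, and positive recurrence. -/
def AssumptionA (P : E → Measure Ω) (J : ℕ → Ω → E) (S : ℕ → Ω → ℕ) : Prop :=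
  (∀ i j : E, 0 < P i {ω | ∃ n, 1 ≤ n ∧ J n ω = j}) ∧
  (∀ i : E, ∀ d : ℕ,
      (∀ k, 0 < P i {ω | S (tau J i ω) ω = k} → d ∣ k) → d = 1) ∧
  (∀ i : E, (∀ᵐ ω ∂(P i), ∃ n, 1 ≤ n ∧ J n ω = i) ∧
      Integrable (fun ω => (S (tau J i ω) ω : ℝ)) (P i))

/-- `N(M)`: the number of jumps of the Markov renewal chain up to time `M`. -/
def Ncnt (S : ℕ → Ω → ℕ) (M : ℕ) (ω : Ω) : ℕ := sSup {n | S n ω ≤ M}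

/-- `N_i(M)`: the number of visits of the embedded chain to `i` before time `M`. -/
def Nvis (J : ℕ → Ω → E) (S : ℕ → Ω → ℕ) (i : E) (M : ℕ) (ω : Ω) : ℕ :=
  ∑ n ∈ Finset.Icc 1 (Ncnt S M ω), if J (n-1) ω = i then 1 else 0

/-- The empirical (nonparametric) estimator `q̂(M)` of the semi-Markov kernel. -/
def qhat (J : ℕ → Ω → E) (S : ℕ → Ω → ℕ) (M : ℕ) (ω : Ω) (i j : E) (k : ℕ) : ℝ :=
  (∑ n ∈ Finset.Icc 1 (Ncnt S M ω),
      if J (n-1) ω = i ∧ J n ω = j ∧ Xproc S n ω = k then (1:ℝ) else 0) /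
    (Nvis J S i M ω : ℝ)

/-- The entry of a matrix sequence at `e = (i, j, k)`. -/
def entry (A : E → E → ℕ → ℝ) (e : E × E × ℕ) : ℝ := A e.1 e.2.1 e.2.2

/-- Matrix convolution of matrix sequences. -/
def mconv (A B : E → E → ℕ → ℝ) : E → E → ℕ → ℝ := fun i j k =>
  ∑ l ∈ Finset.range (k+1), ∑ u, A i u l * B u j (k - l)

/-- Convolution of scalar sequences. -/
def sconv (a b : ℕ → ℝ) : ℕ → ℝ := fun k => ∑ l ∈ Finset.range (k+1), a l * b (k - l)

/-- The identity `δI` for matrix convolution. -/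
def deltaI : E → E → ℕ → ℝ := fun i j k => if i = j ∧ k = 0 then 1 else 0

/-- `n`-fold matrix convolution power. -/
def mpow (A : E → E → ℕ → ℝ) : ℕ → E → E → ℕ → ℝ
  | 0 => deltaI
  | n + 1 => mconv A (mpow A n)

/-- The convolution inverse `(δI − A)^{(−1)} = ∑_{n ≥ 0} A^{(n)}`. -/
def psiOf (A : E → E → ℕ → ℝ) : E → E → ℕ → ℝ := fun i j k => ∑' n, mpow A n i j k

/-- The operator `S`: `(S A)_{ij}(k) = 1{i=j} ∑_{j'} ∑_{k' > k} A_{ij'}(k')`. -/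
def Sop (A : E → E → ℕ → ℝ) : E → E → ℕ → ℝ := fun i j k =>
  if i = j then ∑' p : E × ℕ, if k < p.2 then A i p.1 p.2 else 0 else 0

/-- Cumulative sum of a scalar sequence, `(cumul a) k = ∑_{l ≤ k} a l`. -/
def cumul (a : ℕ → ℝ) (k : ℕ) : ℝ := ∑ l ∈ Finset.range (k+1), a l

/-- `H_j(k) = ∑_{j'} ∑_{k' ≤ k} q_{jj'}(k')`, the sojourn time c.d.f. in state `j`. -/
def Hseq (q : E → E → ℕ → ℝ) (j : E) (k : ℕ) : ℝ :=
  ∑ j', ∑ l ∈ Finset.range (k+1), q j j' l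

/-- The matrix sequence `δ^{et}` with entry `1` at `et` and `0` elsewhere. -/
def deltaM (et : E × E × ℕ) : E → E → ℕ → ℝ := fun i j k => if (i, j, k) = et then 1 else 0

/-- The matrix sequence `q^{it}` with `q^{it}_{ij}(k) = 1{i = it} q_{ij}(k)`. -/
def qres (q : E → E → ℕ → ℝ) (it : E) : E → E → ℕ → ℝ :=
  fun i j k => if i = it then q i j k else 0

/-- The semi-Markov chain `Z_k = J_{N(k)}` associated to `(J, S)`. -/
def Zproc (J : ℕ → Ω → E) (S : ℕ → Ω → ℕ) (k : ℕ) (ω : Ω) : E := J (Ncnt S k ω) ω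

/-- The distribution matrix sequence `P_{ij}(k) = P_i(Z_k = j)` of the semi-Markov chain. -/
def Pdist (P : E → Measure Ω) (J : ℕ → Ω → E) (S : ℕ → Ω → ℕ) (i j : E) (k : ℕ) : ℝ :=
  (P i {ω | Zproc J S k ω = j}).toReal

/-- The estimator `P̂(M) = ψ̂(M) * S q̂(M)` of the distribution matrix sequence. -/
def Phat (J : ℕ → Ω → E) (S : ℕ → Ω → ℕ) (M : ℕ) (ω : Ω) : E → E → ℕ → ℝ :=
  mconv (psiOf (qhat J S M ω)) (Sop (qhat J S M ω))

/-- The reliability vector sequence `R_i(k) = P_i(T_D > k)`, for `i ∈ U`,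
where `D = Uᶜ` and `T_D` is the first entrance time of `Z` into `D`. -/
def Rrel (P : E → Measure Ω) (J : ℕ → Ω → E) (S : ℕ → Ω → ℕ) (U : Finset E)
    (i : E) (k : ℕ) : ℝ :=
  (P i {ω | ∀ l ≤ k, Zproc J S l ω ∈ U}).toReal

/-- Restriction of a matrix sequence to `Ũ = U × U × ℕ` (extended by `0`). -/
def restrictUU (U : Finset E) (A : E → E → ℕ → ℝ) : E → E → ℕ → ℝ :=
  fun i j k => if i ∈ U ∧ j ∈ U then A i j k else 0

/-- Convolution of a matrix sequence with a vector sequence. -/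
def mvconv (A : E → E → ℕ → ℝ) (v : E → ℕ → ℝ) : E → ℕ → ℝ := fun i k =>
  ∑ l ∈ Finset.range (k+1), ∑ u, A i u l * v u (k - l)

/-- The diagonal `(A)_U` of a matrix sequence, as a vector sequence. -/
def diagOf (A : E → E → ℕ → ℝ) : E → ℕ → ℝ := fun i k => A i i k

/-- The estimator `R̂(M) = ψ̂_UU(M) * (S q̂(M))_U` of the reliability vector sequence. -/
def Rhat (J : ℕ → Ω → E) (S : ℕ → Ω → ℕ) (U : Finset E) (M : ℕ) (ω : Ω) : E → ℕ → ℝ :=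
  mvconv (psiOf (restrictUU U (qhat J S M ω))) (diagOf (Sop (qhat J S M ω)))

/-- `μG` is the law of a centered Gaussian family indexed by `ι` with covariance `V`:
every finite linear combination of coordinates has a centered normal distribution with the
appropriate variance. -/
def IsCenteredGaussianLaw {ι : Type} (μG : Measure (ι → ℝ)) (V : ι → ι → ℝ) : Prop :=
  ∀ a : ι →₀ ℝ,
    Measure.map (fun x => ∑ e ∈ a.support, a e * x e) μG =
      gaussianReal 0
        (Real.toNNReal (∑ e ∈ a.support, ∑ e' ∈ a.support, a e * V e e' * a e'))

/-- `(Z_e)_{e ∈ ι}` is a centered Gaussian family with covariance `V` under `P`. -/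
def IsCenteredGaussianFamily {ι : Type} (P : Measure Ω) (Z : ι → Ω → ℝ)
    (V : ι → ι → ℝ) : Prop :=
  (∀ e, Measurable (Z e)) ∧
  ∀ a : ι →₀ ℝ,
    Measure.map (fun ω => ∑ e ∈ a.support, a e * Z e ω) P =
      gaussianReal 0
        (Real.toNNReal (∑ e ∈ a.support, ∑ e' ∈ a.support, a e * V e e' * a e'))

/-- The covariance matrix `V^q` of the CLT for `q̂`, with `μr i = μ_{ii}`. -/
def Vq (q : E → E → ℕ → ℝ) (μr : E → ℝ) : (E × E × ℕ) → (E × E × ℕ) → ℝ := fun e e' =>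
  μr e.1 * (if e.1 = e'.1 then 1 else 0) * entry q e *
    ((if e.2.1 = e'.2.1 ∧ e.2.2 = e'.2.2 then 1 else 0) - entry q e')

/-! The row sum `∑_{j, k ≤ K} Z_{ij}(k)` is a centered Gaussian whose variance, by the
multinomial shape of `V^q`, is `μ_{ii} H_i(K) (1 - H_i(K))` with `H_i(K) = ∑_{j, k ≤ K} q_{ij}(k)`.
Since `H_i(K) → 1`, its `L²` norm, the square root of that variance, tends to `0`. The second
claim is the first one after splitting `{0, …, K} = {0, …, k} ∪ (k, K]`. -/

open scoped ENNReal NNReal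

lemma eLpNorm_id_two_gaussianReal (v : ℝ≥0) :
    eLpNorm id 2 (gaussianReal 0 v) = (v : ℝ≥0∞) ^ (1 / 2 : ℝ) := by
  have hvar : evariance id (gaussianReal 0 v) = v := by
    rw [← ofReal_variance (memLp_id_gaussianReal' 2 ENNReal.ofNat_ne_top),
      variance_id_gaussianReal, ENNReal.ofReal_coe_nnreal]
  rw [eLpNorm_eq_lintegral_rpow_enorm_toReal two_ne_zero ENNReal.ofNat_ne_top, ← hvar, evariance]
  simp [integral_id_gaussianReal]

lemma eLpNorm_two_of_map_eq_gaussianReal {α : Type*} {mα : MeasurableSpace α} {μ : Measure α}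
    {f : α → ℝ} (hf : AEMeasurable f μ) {v : ℝ≥0} (h : μ.map f = gaussianReal 0 v) :
    eLpNorm f 2 μ = (v : ℝ≥0∞) ^ (1 / 2 : ℝ) := by
  rw [← eLpNorm_id_two_gaussianReal, ← h, eLpNorm_map_measure aestronglyMeasurable_id hf]
  rfl

lemma sum_sum_mul_ite_sub {α : Type*} [DecidableEq α] (s : Finset α) (Q : α → ℝ) :
    ∑ x ∈ s, ∑ y ∈ s, Q x * ((if x = y then 1 else 0) - Q y)
      = (∑ x ∈ s, Q x) * (1 - ∑ x ∈ s, Q x) := by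
  simp_rw [mul_sub, sum_sub_distrib, mul_ite, mul_one, mul_zero, sum_ite_eq, sum_ite_mem,
    inter_self, ← mul_sum, ← sum_mul]

lemma HasSum.tendsto_sum_univ_product_range {ι : Type*} [Fintype ι] {f : ι × ℕ → ℝ} {a : ℝ}
    (hf : HasSum f a) :
    Tendsto (fun K => ∑ p ∈ univ ×ˢ range (K + 1), f p) atTop (𝓝 a) := by
  refine hf.comp (tendsto_atTop_finset_of_monotone (fun K L hKL => ?_) fun p => ⟨p.2, ?_⟩)
  · exact product_subset_product subset_rfl (range_subset_range.2 (by omega))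
  · simp

namespace IsCenteredGaussianFamily

variable {ι : Type} {P : Measure Ω} {Z : ι → Ω → ℝ} {V : ι → ι → ℝ}

lemma map_sum (hZ : IsCenteredGaussianFamily P Z V) (s : Finset ι) :
    P.map (fun ω => ∑ e ∈ s, Z e ω)
      = gaussianReal 0 (∑ e ∈ s, ∑ e' ∈ s, V e e').toNNReal := by
  classical
  let a : ι →₀ ℝ := Finsupp.indicator s fun _ _ => 1
  have ha : ∀ e ∈ s, a e = 1 := fun e he => Finsupp.indicator_of_mem he _
  have hsupp : a.support = s := by
    ext e
    simp [a, Finsupp.indicator_apply]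
  convert hZ.2 a using 3 with ω
  · rw [hsupp]
    exact sum_congr rfl fun e he => by rw [ha e he, one_mul]
  · rw [hsupp]
    exact sum_congr rfl fun e he => sum_congr rfl fun e' he' => by rw [ha e he, ha e' he']; ring

lemma eLpNorm_sum (hZ : IsCenteredGaussianFamily P Z V) (s : Finset ι) :
    eLpNorm (fun ω => ∑ e ∈ s, Z e ω) 2 P
      = ((∑ e ∈ s, ∑ e' ∈ s, V e e').toNNReal : ℝ≥0∞) ^ (1 / 2 : ℝ) :=
  eLpNorm_two_of_map_eq_gaussianReal
    (Finset.measurable_sum s fun e _ => hZ.1 e).aemeasurable (hZ.map_sum s)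

lemma tendsto_eLpNorm_sum (hZ : IsCenteredGaussianFamily P Z V) {β : Type*} {l : Filter β}
    {s : β → Finset ι} (hs : Tendsto (fun b => ∑ e ∈ s b, ∑ e' ∈ s b, V e e') l (𝓝 0)) :
    Tendsto (fun b => eLpNorm (fun ω => ∑ e ∈ s b, Z e ω) 2 P) l (𝓝 0) := by
  simp_rw [hZ.eLpNorm_sum]
  have hcont : Continuous fun x : ℝ => (x.toNNReal : ℝ≥0∞) ^ (1 / 2 : ℝ) :=
    ENNReal.continuous_rpow_const.comp (ENNReal.continuous_coe.comp continuous_real_toNNReal)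
  simpa [Function.comp_def] using (hcont.tendsto 0).comp hs

end IsCenteredGaussianFamily

lemma sum_sum_Vq_row {S : Type} [DecidableEq S] (q : S → S → ℕ → ℝ) (μr : S → ℝ) (i : S)
    (F : Finset (S × ℕ)) :
    ∑ e ∈ {i} ×ˢ F, ∑ e' ∈ {i} ×ˢ F, Vq q μr e e'
      = μr i * ((∑ p ∈ F, q i p.1 p.2) * (1 - ∑ p ∈ F, q i p.1 p.2)) := by
  rw [← sum_sum_mul_ite_sub, mul_sum]
  simp only [sum_product, sum_singleton, mul_sum]
  refine sum_congr rfl fun p _ => sum_congr rfl fun p' _ => ?_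
  simp only [Vq, entry, if_true, mul_one, ← Prod.ext_iff]
  ring

lemma tendsto_eLpNorm_row_sum {P : Measure Ω} {q : E → E → ℕ → ℝ} (hq : IsSemiMarkovKernel q)
    {μr : E → ℝ} {Z : (E × E × ℕ) → Ω → ℝ} (hZ : IsCenteredGaussianFamily P Z (Vq q μr))
    (i : E) :
    Tendsto (fun K : ℕ =>
        eLpNorm (fun ω => ∑ j : E, ∑ k ∈ range (K + 1), Z (i, j, k) ω) 2 P) atTop (𝓝 0) := by
  have hmass := HasSum.tendsto_sum_univ_product_range (hq.2.2 i)
  have hvar := (hmass.mul ((tendsto_const_nhds (x := (1 : ℝ))).sub hmass)).const_mul (μr i)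
  rw [sub_self, mul_zero, mul_zero] at hvar
  refine (hZ.tendsto_eLpNorm_sum (s := fun K => {i} ×ˢ (univ ×ˢ range (K + 1)))
    (by simpa only [sum_sum_Vq_row] using hvar)).congr fun K => ?_
  simp only [sum_product, sum_singleton]

theorem statement14_general (P : Measure Ω)
    (q : E → E → ℕ → ℝ) (hq : IsSemiMarkovKernel q)
    (μr : E → ℝ)
    (Z : (E × E × ℕ) → Ω → ℝ)
    (hZ : IsCenteredGaussianFamily P Z (Vq q μr)) :
    (∀ i : E,
      Tendsto (fun K : ℕ =>
          eLpNorm (fun ω => ∑ j : E, ∑ k ∈ Finset.range (K+1), Z (i, j, k) ω) 2 P)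
        atTop (𝓝 0)) ∧
    ∀ (i j : E) (k : ℕ),
      Tendsto (fun K : ℕ =>
          eLpNorm (fun ω =>
            (if i = j then ∑ j' : E, ∑ k' ∈ Finset.Ioc k K, Z (i, j', k') ω else 0) -
              (-(if i = j then
                  ∑ j' : E, ∑ k' ∈ Finset.range (k+1), Z (i, j', k') ω else 0))) 2 P)
        atTop (𝓝 0) := by
  refine ⟨tendsto_eLpNorm_row_sum hq hZ, fun i j k => ?_⟩
  by_cases hij : i = j
  · subst hij
    refine (tendsto_eLpNorm_row_sum hq hZ i).congr' ?_
    filter_upwards [eventually_ge_atTop k] with K hK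
    congr 1 with ω
    simp only [if_true, sub_neg_eq_add, ← sum_add_distrib]
    refine sum_congr rfl fun j _ => ?_
    rw [← Ico_add_one_add_one_eq_Ioc, ← sum_range_add_sum_Ico _ (by omega : k + 1 ≤ K + 1),
      add_comm]
  · simp [hij]

/-- Lemma 4.6 of the paper: if `Z^q` is a centered Gaussian family with covariance
`V^q`, then for every `i` the row sums `∑_{j} ∑_{k ≤ K} Z^q_{ij}(k)` converge to `0`
in `L²` as `K → ∞`; consequently `S Z^q` is well-defined (its defining partial sums
converge in `L²`) and `(S Z^q)_{ij}(k) = −1{i=j} ∑_{j'} ∑_{k' ≤ k} Z^q_{ij'}(k')`. -/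
theorem statement14 (P : Measure Ω) (hP : IsProbabilityMeasure P)
    (q : E → E → ℕ → ℝ) (hq : IsSemiMarkovKernel q)
    (μr : E → ℝ) (hμr : ∀ i, 0 ≤ μr i)
    (Z : (E × E × ℕ) → Ω → ℝ)
    (hZ : IsCenteredGaussianFamily P Z (Vq q μr)) :
    (∀ i : E,
      Tendsto (fun K : ℕ =>
          eLpNorm (fun ω => ∑ j : E, ∑ k ∈ Finset.range (K+1), Z (i, j, k) ω) 2 P)
        atTop (𝓝 0)) ∧
    ∀ (i j : E) (k : ℕ),
      Tendsto (fun K : ℕ =>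
          eLpNorm (fun ω =>
            (if i = j then ∑ j' : E, ∑ k' ∈ Finset.Ioc k K, Z (i, j', k') ω else 0) -
              (-(if i = j then
                  ∑ j' : E, ∑ k' ∈ Finset.range (k+1), Z (i, j', k') ω else 0))) 2 P)
        atTop (𝓝 0) :=
  statement14_general P q hq μr Z hZ

end SMCPaper
end
end

section
/- The diagonal entries of the covariance matrix V^ψ := ∑_{ẽ∈Ẽ} q̄_{ẽ} (ψ * δ^{ẽ} * ψ)^{⊗2} − ∑_{ĩ∈E} μ_{ĩĩ} (ψ * q^{ĩ} * ψ)^{⊗2} are given, for e = (i,j,k) ∈ Ẽ, by V^ψ_{ee} = ∑_{ĩ∈E} μ_{ĩĩ} { ∑_{j̃∈E} [(ψ_{iĩ} * ψ_{j̃j})² * q_{ĩj̃}](k) − [∑_{j̃∈E} (ψ_{iĩ} * q_{ĩj̃} * ψ_{j̃j})(k)]² }. -/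
open MeasureTheory Filter Topology Finset ProbabilityTheory

noncomputable section

namespace SMCPaper

variable {E : Type} [Fintype E] [DecidableEq E] {Ω : Type} [MeasurableSpace Ω]

/-- The asymptotic covariance matrix `V^ψ` for the convolution-inverse estimator. -/
def Vpsi (q : E → E → ℕ → ℝ) (μr : E → ℝ) : (E × E × ℕ) → (E × E × ℕ) → ℝ := fun e e' =>
  (∑' et : E × E × ℕ,
      μr et.1 * entry q et *
        (entry (mconv (mconv (psiOf q) (deltaM et)) (psiOf q)) e *
          entry (mconv (mconv (psiOf q) (deltaM et)) (psiOf q)) e')) -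
    ∑ it, μr it *
      (entry (mconv (mconv (psiOf q) (qres q it)) (psiOf q)) e *
        entry (mconv (mconv (psiOf q) (qres q it)) (psiOf q)) e')

/-- The asymptotic variance `v^ψ(i,j,k)` for the convolution-inverse estimator. -/
def vpsi (q : E → E → ℕ → ℝ) (μr : E → ℝ) (i j : E) (k : ℕ) : ℝ :=
  ∑ it, μr it *
    ((∑ jt, sconv (fun l => (sconv (psiOf q i it) (psiOf q jt j) l)^2) (q it jt) k) -
     (∑ jt, sconv (sconv (psiOf q i it) (q it jt)) (psiOf q jt j) k)^2)

/-!
Both `δ^{(ĩ,j̃,k̃)}` and `q^{ĩ}` vanish outside the row `ĩ`, so the `(i,j,k)` entry of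
`ψ * D * ψ` is `∑_u (ψ_{iĩ} * D_{ĩu} * ψ_{uj})(k)`. For `D = δ^{(ĩ,j̃,k̃)}` this is
`(ψ_{iĩ} * ψ_{j̃j})(k − k̃)` when `k̃ ≤ k` and `0` otherwise; hence the series over `Ẽ` is a
finite sum, and `∑_{k̃ ≤ k} q_{ĩj̃}(k̃) (ψ_{iĩ} * ψ_{j̃j})(k − k̃)²` is the convolution
`[(ψ_{iĩ} * ψ_{j̃j})² * q_{ĩj̃}](k)`.
-/

theorem sconv_comm (a b : ℕ → ℝ) : sconv a b = sconv b a := by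
  ext k
  rw [sconv, sconv, ← sum_range_reflect]
  refine sum_congr rfl fun l hl => ?_
  rw [mem_range] at hl
  rw [show k + 1 - 1 - l = k - l by omega, show k - (k - l) = l by omega, mul_comm]

theorem sconv_pi_single (f : ℕ → ℝ) (c k : ℕ) :
    sconv f (Pi.single c 1) k = if c ≤ k then f (k - c) else 0 := by
  rw [sconv_comm, sconv]
  simp only [Pi.single_apply, ite_mul, one_mul, zero_mul, sum_ite_eq', mem_range]
  exact if_congr (by omega) rfl rfl

theorem sconv_shift (f g : ℕ → ℝ) (c k : ℕ) :
    sconv (fun l => if c ≤ l then f (l - c) else 0) g k =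
      if c ≤ k then sconv f g (k - c) else 0 := by
  split_ifs with hck
  · obtain ⟨m, rfl⟩ := Nat.exists_eq_add_of_le hck
    rw [sconv, show c + m + 1 = c + (m + 1) by omega, sum_range_add, Nat.add_sub_cancel_left]
    have hlow : ∑ l ∈ range c, (if c ≤ l then f (l - c) else 0) * g (c + m - l) = 0 :=
      sum_eq_zero fun l hl => by rw [if_neg (by simpa using hl), zero_mul]
    rw [hlow, zero_add, sconv]
    refine sum_congr rfl fun l _ => ?_
    rw [if_pos (by omega), Nat.add_sub_cancel_left, Nat.add_sub_add_left]
  · refine sum_eq_zero fun l hl => ?_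
    have hcl : ¬c ≤ l := by rw [mem_range] at hl; omega
    simp only [hcl, if_false, zero_mul]

theorem mconv_mconv_apply_of_row_eq_zero {ι : Type} [Fintype ι] {A D B : ι → ι → ℕ → ℝ} {a : ι}
    (hD : ∀ w, w ≠ a → D w = 0) (i j : ι) (k : ℕ) :
    mconv (mconv A D) B i j k = ∑ u, sconv (sconv (A i a) (D a u)) (B u j) k := by
  have hAD : ∀ u l, mconv A D i u l = sconv (A i a) (D a u) l := fun u l =>
    sum_congr rfl fun m _ => sum_eq_single a (fun w _ hw => by simp [hD w hw]) (by simp)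
  show ∑ l ∈ range (k + 1), ∑ u, mconv A D i u l * B u j (k - l) = _
  simp only [hAD]
  exact sum_comm

theorem entry_mconv_deltaM_mconv (A B : E → E → ℕ → ℝ) (a b : E) (c : ℕ) (i j : E) (k : ℕ) :
    entry (mconv (mconv A (deltaM (a, b, c))) B) (i, j, k) =
      if c ≤ k then sconv (A i a) (B b j) (k - c) else 0 := by
  have hrow : ∀ w, w ≠ a → deltaM (a, b, c) w = 0 := fun w hw => by
    ext u n
    simp [deltaM, hw]
  have hself : ∀ u, deltaM (a, b, c) a u = if u = b then Pi.single c 1 else 0 := fun u => by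
    ext n
    by_cases hu : u = b
    · simp [deltaM, Pi.single_apply, hu, eq_comm]
    · simp [deltaM, hu]
  have hshift : sconv (A i a) (Pi.single c 1) = fun l => if c ≤ l then A i a (l - c) else 0 :=
    funext (sconv_pi_single (A i a) c)
  rw [entry, mconv_mconv_apply_of_row_eq_zero hrow,
    sum_eq_single b (fun u _ hu => by simp [hself, hu, sconv]) (by simp), hself, if_pos rfl,
    hshift, sconv_shift]

theorem entry_mconv_qres_mconv (A q B : E → E → ℕ → ℝ) (a : E) (i j : E) (k : ℕ) :
    entry (mconv (mconv A (qres q a)) B) (i, j, k) =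
      ∑ b, sconv (sconv (A i a) (q a b)) (B b j) k := by
  have hrow : ∀ w, w ≠ a → qres q a w = 0 := fun w hw => by
    ext u n
    simp [qres, hw]
  have hself : ∀ u, qres q a a u = q a u := fun u => funext fun n => if_pos rfl
  simp only [entry, mconv_mconv_apply_of_row_eq_zero hrow, hself]

theorem tsum_entry_mconv_deltaM_mconv_sq (q A B : E → E → ℕ → ℝ) (μr : E → ℝ)
    (i j : E) (k : ℕ) :
    ∑' et : E × E × ℕ, μr et.1 * entry q et *
        (entry (mconv (mconv A (deltaM et)) B) (i, j, k) *
          entry (mconv (mconv A (deltaM et)) B) (i, j, k)) =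
      ∑ a, μr a * ∑ b, sconv (fun l => sconv (A i a) (B b j) l ^ 2) (q a b) k := by
  have hterm : ∀ et : E × E × ℕ, μr et.1 * entry q et *
      (entry (mconv (mconv A (deltaM et)) B) (i, j, k) *
        entry (mconv (mconv A (deltaM et)) B) (i, j, k)) =
      if et.2.2 ≤ k then μr et.1 * (q et.1 et.2.1 et.2.2 *
        sconv (A i et.1) (B et.2.1 j) (k - et.2.2) ^ 2) else 0 := by
    rintro ⟨a, b, c⟩
    rw [entry_mconv_deltaM_mconv]
    split_ifs <;> simp only [entry] <;> ring
  have hsupp : ∀ et ∉ (univ ×ˢ univ ×ˢ range (k + 1) : Finset (E × E × ℕ)),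
      (if et.2.2 ≤ k then μr et.1 * (q et.1 et.2.1 et.2.2 *
        sconv (A i et.1) (B et.2.1 j) (k - et.2.2) ^ 2) else 0) = 0 := fun et het => by
    simp only [mem_product, mem_univ, mem_range, true_and] at het
    exact if_neg (by omega)
  have hconv : ∀ a b, ∑ c ∈ range (k + 1), (if c ≤ k then μr a * (q a b c *
      sconv (A i a) (B b j) (k - c) ^ 2) else 0) =
      μr a * sconv (fun l => sconv (A i a) (B b j) l ^ 2) (q a b) k := fun a b => by
    rw [sconv_comm _ (q a b), sconv, mul_sum]
    exact sum_congr rfl fun c hc => if_pos (Nat.lt_succ_iff.mp (mem_range.mp hc))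
  simp only [hterm, tsum_eq_sum hsupp, sum_product, hconv, ← mul_sum]

theorem statement17_general (q : E → E → ℕ → ℝ)
    (μr : E → ℝ) (i j : E) (k : ℕ) :
    Vpsi q μr (i, j, k) (i, j, k) = vpsi q μr i j k := by
  simp only [Vpsi, vpsi, tsum_entry_mconv_deltaM_mconv_sq, entry_mconv_qres_mconv, mul_sub,
    sum_sub_distrib, sq]

/-- The diagonal entries of `V^ψ` coincide with the one-dimensional asymptotic
variance `v^ψ` (Appendix A.1 of the paper). -/
theorem statement17 (q : E → E → ℕ → ℝ) (hq : IsSemiMarkovKernel q)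
    (μr : E → ℝ) (hμr : ∀ i, 0 ≤ μr i) (i j : E) (k : ℕ) :
    Vpsi q μr (i, j, k) (i, j, k) = vpsi q μr i j k :=
  statement17_general q μr i j k

end SMCPaper
end
end
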